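/- arXiv:1012.4514 — 3 statements merged into one kernel-verified Lean document; each statement's English description precedes it below -/
import Mathlib

section
/- Let T be a contraction on an n-dimensional Hilbert space H and p a polynomial of degree at most N. If U is a unitary N-dilation of T on a finite-dimensional space, then ‖p(T)‖ ≤ sup_{|z|=1} |p(z)|. In particular (combining with the existence of N-dilations), von Neumann's inequality ‖p(T)‖ ≤ ‖p‖_∞ holds for every contraction on a finite-dimensional Hilbert space and every polynomial p. -/
/-!
A unitary `U` is normal with spectrum on the unit circle, so the continuous functional calculus
gives `‖p(U)‖ ≤ sup_{|z|=1} |p(z)|`. If `U` is a unitary `N`-dilation of `T` through the isometry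
`W` and `deg p ≤ N`, then `p(T) = W* p(U) W`, hence `‖p(T)‖ ≤ ‖p(U)‖`.

Such a dilation exists by Egerváry's construction: with the defect operators
`D = (1 - T*T)^{1/2}` and `D' = (1 - TT*)^{1/2}`, the operator
`(x₀, …, x_{N+1}) ↦ (T x₀ + D' x_{N+1}, D x₀ - T* x_{N+1}, x₁, …, x_N)` on `H^{N+2}` is
isometric, hence unitary, and the first coordinate of `U^k (h, 0, …, 0)` is `T^k h` for
`k ≤ N + 1`. Isometry rests on the intertwining `T D = D' T`; in finite dimension the spectra
of `T*T` and `TT*` are finite, so `D` and `D'` are the same real polynomial in `T*T` and `TT*`,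
which makes the intertwining a consequence of `T (T*T) = (TT*) T`.
-/

open Polynomial ContinuousLinearMap

theorem SemiconjBy.aeval {R A : Type*} [CommSemiring R] [Semiring A] [Algebra R A] {x a b : A}
    (h : SemiconjBy x a b) (q : R[X]) : SemiconjBy x (aeval a q) (aeval b q) := by
  induction q using Polynomial.induction_on' with
  | add f g hf hg => simpa only [map_add] using hf.add_right hg
  | monomial n c =>
    simpa only [aeval_monomial] using
      SemiconjBy.mul_right (Algebra.commute_algebraMap_right c x) (h.pow_right n)

theorem spectrum.finite_of_finiteDimensional {K A : Type*} [Field K] [Ring A] [Algebra K A]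
    [FiniteDimensional K A] (a : A) : (spectrum K a).Finite := by
  nontriviality A
  refine ((minpoly K a).rootSet_finite K).subset fun k hk => ?_
  have := spectrum.subset_polynomial_aeval a (minpoly K a) ⟨k, hk, rfl⟩
  rw [minpoly.aeval, spectrum.zero_eq, Set.mem_singleton_iff] at this
  exact (mem_rootSet_of_ne (minpoly.ne_zero (Algebra.IsIntegral.isIntegral a))).2
    (by simpa using this)

theorem SemiconjBy.cfc_of_finite_spectrum {A : Type*} [Ring A] [StarRing A] [Algebra ℝ A]
    [TopologicalSpace A] [ContinuousFunctionalCalculus ℝ A IsSelfAdjoint] {x a b : A}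
    (h : SemiconjBy x a b) (ha : IsSelfAdjoint a) (hb : IsSelfAdjoint b)
    (ha' : (spectrum ℝ a).Finite) (hb' : (spectrum ℝ b).Finite) (f : ℝ → ℝ) :
    SemiconjBy x (cfc f a) (cfc f b) := by
  classical
  obtain ⟨r, hr⟩ : ∃ r : ℝ[X], ∀ t ∈ spectrum ℝ a ∪ spectrum ℝ b, r.eval t = f t :=
    ⟨Lagrange.interpolate (ha'.union hb').toFinset id f, fun t ht =>
      Lagrange.eval_interpolate_at_node f (Set.injOn_id _) ((ha'.union hb').mem_toFinset.2 ht)⟩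
  rw [cfc_congr fun t ht => (hr t (.inl ht)).symm, cfc_congr fun t ht => (hr t (.inr ht)).symm,
    cfc_polynomial r a, cfc_polynomial r b]
  exact h.aeval r

section Defect

variable {A : Type*} [CStarAlgebra A]

noncomputable def defectOperator (T : A) : A :=
  cfc (fun t : ℝ => √(1 - t)) (star T * T)

theorem isSelfAdjoint_defectOperator (T : A) : IsSelfAdjoint (defectOperator T) :=
  cfc_predicate _ _

theorem defectOperator_mul_self {T : A} (hT : ‖T‖ ≤ 1) :
    defectOperator T * defectOperator T = 1 - star T * T := by
  nontriviality A
  have hspec (t : ℝ) (ht : t ∈ spectrum ℝ (star T * T)) : t ≤ 1 :=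
    calc t ≤ ‖t‖ := Real.le_norm_self t
      _ ≤ ‖star T * T‖ := spectrum.norm_le_norm_of_mem ht
      _ = ‖T‖ * ‖T‖ := CStarRing.norm_star_mul_self
      _ ≤ 1 := mul_le_one₀ hT (norm_nonneg T) hT
  rw [defectOperator, ← cfc_mul .., cfc_congr (g := fun t => 1 - t), cfc_sub ..,
    cfc_const_one ℝ _, cfc_id' ..]
  exact fun t ht => Real.mul_self_sqrt (sub_nonneg.2 (hspec t ht))

theorem mul_defectOperator [FiniteDimensional ℂ A] (T : A) :
    T * defectOperator T = defectOperator (star T) * T := by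
  have hfin (a : A) : (spectrum ℝ a).Finite := by
    rw [← spectrum.preimage_algebraMap ℂ]
    exact (spectrum.finite_of_finiteDimensional a).preimage
      (FaithfulSMul.algebraMap_injective ℝ ℂ).injOn
  refine SemiconjBy.cfc_of_finite_spectrum ?_ (.star_mul_self T) (.star_mul_self _) (hfin _)
    (hfin _) _
  simp only [SemiconjBy, star_star, mul_assoc]

end Defect

theorem norm_aeval_le_of_mem_unitary {A : Type*} [CStarAlgebra A] {u : A} (hu : u ∈ unitary A)
    (p : ℂ[X]) {M : ℝ} (hM : 0 ≤ M) (hp : ∀ z : ℂ, ‖z‖ = 1 → ‖p.eval z‖ ≤ M) :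
    ‖aeval u p‖ ≤ M := by
  rw [← cfc_polynomial p u]
  exact norm_cfc_le hM fun z hz => hp z (by simpa using spectrum.subset_circle_of_unitary hu hz)

section Compression

variable {𝕜 H K : Type*} [RCLike 𝕜] [NormedAddCommGroup H] [InnerProductSpace 𝕜 H]
  [CompleteSpace H] [NormedAddCommGroup K] [InnerProductSpace 𝕜 K] [CompleteSpace K]

def IsNDilation (N : ℕ) (T : H →L[𝕜] H) (W : H →ₗᵢ[𝕜] K) (U : K →L[𝕜] K) : Prop :=
  ∀ k, 1 ≤ k → k ≤ N → ∀ h, adjoint W.toContinuousLinearMap ((U ^ k) (W h)) = (T ^ k) h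

variable {T : H →L[𝕜] H} {U : K →L[𝕜] K} {W : H →ₗᵢ[𝕜] K} {N : ℕ}

theorem IsNDilation.aeval_eq_adjoint_comp_aeval_comp (hdil : IsNDilation N T W U) {p : 𝕜[X]}
    (hp : p.natDegree ≤ N) :
    aeval T p = adjoint W.toContinuousLinearMap ∘L aeval U p ∘L W.toContinuousLinearMap := by
  have hpow (k : ℕ) (hk : k ≤ N) (h : H) :
      adjoint W.toContinuousLinearMap ((U ^ k) (W h)) = (T ^ k) h := by
    rcases Nat.eq_zero_or_pos k with rfl | hk0
    · have := congr($((norm_map_iff_adjoint_comp_self W.toContinuousLinearMap).1 W.norm_map) h)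
      rw [comp_apply, LinearIsometry.coe_toContinuousLinearMap] at this
      simpa using this
    · exact hdil k hk0 hk h
  ext h
  rw [aeval_eq_sum_range' (Nat.lt_succ_of_le hp), aeval_eq_sum_range' (Nat.lt_succ_of_le hp)]
  simp only [FunLike.coe_sum, Finset.sum_apply, FunLike.coe_smul, Pi.smul_apply, comp_apply,
    map_sum, map_smul]
  refine Finset.sum_congr rfl fun k hk => ?_
  rw [← hpow k (Nat.le_of_lt_succ (Finset.mem_range.1 hk))]
  rfl

theorem IsNDilation.norm_aeval_le (hdil : IsNDilation N T W U) {p : 𝕜[X]}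
    (hp : p.natDegree ≤ N) : ‖aeval T p‖ ≤ ‖aeval U p‖ := by
  have hW : ‖W.toContinuousLinearMap‖ ≤ 1 := W.norm_toContinuousLinearMap_le
  rw [hdil.aeval_eq_adjoint_comp_aeval_comp hp]
  calc _ ≤ ‖adjoint W.toContinuousLinearMap‖ * (‖aeval U p‖ * ‖W.toContinuousLinearMap‖) :=
        (opNorm_comp_le _ _).trans (by gcongr; exact opNorm_comp_le _ _)
    _ ≤ 1 * (‖aeval U p‖ * 1) := by
        rw [LinearIsometryEquiv.norm_map]
        gcongr
    _ = ‖aeval U p‖ := by ring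

end Compression

theorem ContinuousLinearMap.mem_unitary_of_norm_map {𝕜 K : Type*} [RCLike 𝕜]
    [NormedAddCommGroup K] [InnerProductSpace 𝕜 K] [CompleteSpace K] [FiniteDimensional 𝕜 K]
    {U : K →L[𝕜] K} (hU : ∀ x, ‖U x‖ = ‖x‖) : U ∈ unitary (K →L[𝕜] K) :=
  (Unitary.linearIsometryEquiv.symm
    ((⟨U.toLinearMap, hU⟩ : K →ₗᵢ[𝕜] K).toLinearIsometryEquiv rfl)).property

section Single

variable {𝕜 ι : Type*} [RCLike 𝕜] [Fintype ι] [DecidableEq ι] {β : ι → Type*}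
  [∀ i, NormedAddCommGroup (β i)] [∀ i, InnerProductSpace 𝕜 (β i)]

noncomputable def PiLp.singleₗᵢ (i : ι) : β i →ₗᵢ[𝕜] PiLp 2 β where
  toLinearMap := (WithLp.linearEquiv 2 𝕜 _).symm.toLinearMap ∘ₗ LinearMap.single 𝕜 β i
  norm_map' := PiLp.norm_single 2 β i

@[simp] theorem PiLp.singleₗᵢ_apply (i : ι) (b : β i) :
    PiLp.singleₗᵢ (𝕜 := 𝕜) i b = PiLp.single 2 i b := rfl

theorem PiLp.adjoint_singleₗᵢ [∀ i, CompleteSpace (β i)] (i : ι) :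
    adjoint (PiLp.singleₗᵢ (𝕜 := 𝕜) (β := β) i).toContinuousLinearMap = PiLp.proj 2 β i := by
  refine ((eq_adjoint_iff _ _).2 fun x b => ?_).symm
  rw [LinearIsometry.coe_toContinuousLinearMap, PiLp.singleₗᵢ_apply, PiLp.inner_apply,
    Fintype.sum_eq_single i fun j hj => by simp [hj]]
  simp

end Single

section Egervary

variable {𝕜 H : Type*} [RCLike 𝕜] [NormedAddCommGroup H] [InnerProductSpace 𝕜 H] [CompleteSpace H]

theorem norm_sq_add_norm_sq_of_julia {T D Ds : H →L[𝕜] H} (hD : star D * D + star T * T = 1)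
    (hDs : star Ds * Ds + T * star T = 1) (hint : star Ds * T = T * D) (a b : H) :
    ‖T a + Ds b‖ ^ 2 + ‖D a - adjoint T b‖ ^ 2 = ‖a‖ ^ 2 + ‖b‖ ^ 2 := by
  have hsum {S R : H →L[𝕜] H} (h : star S * S + star R * R = 1) (x : H) :
      ‖S x‖ ^ 2 + ‖R x‖ ^ 2 = ‖x‖ ^ 2 := by
    have := congrArg (fun P : H →L[𝕜] H => RCLike.re (inner 𝕜 (P x) x)) h
    simpa [apply_norm_sq_eq_inner_adjoint_left, star_eq_adjoint, inner_add_left,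
      ← @norm_sq_eq_re_inner 𝕜] using this
  have hcross : inner 𝕜 (T a) (Ds b) = inner 𝕜 (D a) (adjoint T b) := by
    rw [← adjoint_inner_left, adjoint_inner_right, ← mul_apply_eq_comp (adjoint Ds),
      ← star_eq_adjoint, hint, mul_apply_eq_comp]
  have ha := hsum hD a
  have hb := hsum (S := Ds) (R := adjoint T) (by simpa [star_eq_adjoint] using hDs) b
  rw [norm_add_sq (𝕜 := 𝕜), norm_sub_sq (𝕜 := 𝕜), hcross]
  linarith

variable (N : ℕ)

noncomputable def egervary (T D Ds : H →L[𝕜] H) :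
    PiLp 2 (fun _ : Fin (N + 2) => H) →L[𝕜] PiLp 2 (fun _ : Fin (N + 2) => H) :=
  (PiLp.continuousLinearEquiv 2 𝕜 _).symm.toContinuousLinearMap ∘L
    ContinuousLinearMap.pi (Fin.cons (T ∘L PiLp.proj 2 _ 0 + Ds ∘L PiLp.proj 2 _ (Fin.last _))
      (Fin.cons (D ∘L PiLp.proj 2 _ 0 - adjoint T ∘L PiLp.proj 2 _ (Fin.last _))
        fun j => PiLp.proj 2 _ j.succ.castSucc))

variable {N} (T D Ds : H →L[𝕜] H) (x : PiLp 2 (fun _ : Fin (N + 2) => H))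

@[simp] theorem egervary_apply_zero :
    egervary N T D Ds x 0 = T (x 0) + Ds (x (Fin.last _)) := rfl

@[simp] theorem egervary_apply_one :
    egervary N T D Ds x 1 = D (x 0) - adjoint T (x (Fin.last _)) := rfl

@[simp] theorem egervary_apply_succ_succ (j : Fin N) :
    egervary N T D Ds x j.succ.succ = x j.succ.castSucc := rfl

variable {T D Ds}

theorem norm_egervary_apply (hD : star D * D + star T * T = 1)
    (hDs : star Ds * Ds + T * star T = 1) (hint : star Ds * T = T * D) :
    ‖egervary N T D Ds x‖ = ‖x‖ := by
  refine (sq_eq_sq₀ (norm_nonneg _) (norm_nonneg _)).1 ?_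
  rw [PiLp.norm_sq_eq_of_L2, PiLp.norm_sq_eq_of_L2, Fin.sum_univ_succ, Fin.sum_univ_succ,
    Fin.sum_univ_succ, Fin.sum_univ_castSucc]
  simp only [Fin.succ_zero_eq_one, egervary_apply_zero, egervary_apply_one,
    egervary_apply_succ_succ, Fin.succ_castSucc, Fin.succ_last]
  linarith [norm_sq_add_norm_sq_of_julia hD hDs hint (x 0) (x (Fin.last _))]

-- The support bound keeps the last coordinate zero while `k ≤ N`, so `Ds` never contributes
-- to the first coordinate.
theorem egervary_pow_apply_single (h : H) {k : ℕ} (hk : k ≤ N + 1) :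
    (egervary N T D Ds ^ k) (PiLp.single 2 0 h) 0 = (T ^ k) h ∧
      ∀ i : Fin (N + 2), k < (i : ℕ) → (egervary N T D Ds ^ k) (PiLp.single 2 0 h) i = 0 := by
  induction k with
  | zero =>
    refine ⟨by simp, fun i hi => ?_⟩
    rw [pow_zero, one_apply_eq_self]
    exact PiLp.single_eq_of_ne (β := fun _ => H) 2 (Fin.pos_iff_ne_zero.1 hi) h
  | succ k ih =>
    obtain ⟨h0, hsupp⟩ := ih (by omega)
    have hlast := hsupp (Fin.last _) (by simp; omega)
    rw [pow_succ', mul_apply_eq_comp]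
    refine ⟨?_, fun i hi => ?_⟩
    · rw [egervary_apply_zero, h0, hlast, map_zero, add_zero, pow_succ', mul_apply_eq_comp]
    induction i using Fin.cases with
    | zero => simp at hi
    | succ i =>
      induction i using Fin.cases with
      | zero => simp at hi
      | succ j =>
        rw [egervary_apply_succ_succ]
        exact hsupp _ (by simp at hi ⊢; omega)

end Egervary

theorem exists_unitary_dilation {H : Type} [NormedAddCommGroup H] [InnerProductSpace ℂ H]
    [FiniteDimensional ℂ H] {T : H →L[ℂ] H} (hT : ‖T‖ ≤ 1) (N : ℕ) :
    ∃ (K : Type) (_ : NormedAddCommGroup K) (_ : InnerProductSpace ℂ K)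
      (_ : FiniteDimensional ℂ K) (W : H →ₗᵢ[ℂ] K) (U : K →L[ℂ] K),
      U ∈ unitary (K →L[ℂ] K) ∧ IsNDilation N T W U := by
  have hD := isSelfAdjoint_defectOperator T
  have hDs := isSelfAdjoint_defectOperator (star T)
  have hU : ∀ x, ‖egervary N T (defectOperator T) (defectOperator (star T)) x‖ = ‖x‖ :=
    fun x => norm_egervary_apply x
      (by rw [hD.star_eq, defectOperator_mul_self hT, sub_add_cancel])
      (by rw [hDs.star_eq, defectOperator_mul_self (norm_star T ▸ hT), star_star, sub_add_cancel])
      (by rw [hDs.star_eq, mul_defectOperator])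
  refine ⟨PiLp 2 (fun _ : Fin (N + 2) => H), inferInstance, inferInstance, inferInstance,
    PiLp.singleₗᵢ (β := fun _ : Fin (N + 2) => H) 0, _,
    ContinuousLinearMap.mem_unitary_of_norm_map hU, fun k _ hk h => ?_⟩
  rw [PiLp.adjoint_singleₗᵢ (𝕜 := ℂ) (β := fun _ : Fin (N + 2) => H) 0, PiLp.proj_apply,
    PiLp.singleₗᵢ_apply]
  exact (egervary_pow_apply_single h (by omega)).1

theorem norm_aeval_le_of_unitary_dilation {H K : Type*} [NormedAddCommGroup H]
    [InnerProductSpace ℂ H] [CompleteSpace H] [NormedAddCommGroup K] [InnerProductSpace ℂ K]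
    [FiniteDimensional ℂ K] {T : H →L[ℂ] H} {W : H →ₗᵢ[ℂ] K} {U : K →L[ℂ] K}
    (hU : U ∈ unitary (K →L[ℂ] K)) {N : ℕ} (hdil : IsNDilation N T W U) {p : ℂ[X]}
    (hp : p.natDegree ≤ N) {M : ℝ} (hM0 : 0 ≤ M) (hM : ∀ z : ℂ, ‖z‖ = 1 → ‖p.eval z‖ ≤ M) :
    ‖aeval T p‖ ≤ M :=
  (hdil.norm_aeval_le hp).trans (norm_aeval_le_of_mem_unitary hU p hM0 hM)

theorem norm_eval_le_sSup_of_norm_eq_one (p : ℂ[X]) {z : ℂ} (hz : ‖z‖ = 1) :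
    ‖p.eval z‖ ≤ sSup {x : ℝ | ∃ z : ℂ, ‖z‖ = 1 ∧ x = ‖p.eval z‖} := by
  obtain ⟨C, hC⟩ :=
    (isCompact_sphere (0 : ℂ) 1).exists_bound_of_continuousOn p.continuous.continuousOn
  exact le_csSup ⟨C, by rintro _ ⟨w, hw, rfl⟩; exact hC w (by simpa using hw)⟩ ⟨z, hz, rfl⟩

/-- **Von Neumann's inequality via N-dilations.** Let `T` be a contraction on a
finite-dimensional complex Hilbert space `H` and `p` a polynomial of degree at most `N`.
(1) If `U` is a unitary `N`-dilation of `T` on a finite-dimensional space `K` (embedded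
via an isometry `W`), then `‖p(T)‖ ≤ sup_{|z|=1} |p(z)|`.
(2) In particular, `‖p(T)‖ ≤ ‖p‖_∞` holds for every contraction on a finite-dimensional
Hilbert space. -/
theorem von_neumann_inequality_via_N_dilations
    (H : Type) [NormedAddCommGroup H] [InnerProductSpace ℂ H] [FiniteDimensional ℂ H]
    (T : H →L[ℂ] H) (hT : ‖T‖ ≤ 1)
    (N : ℕ) (p : Polynomial ℂ) (hdeg : p.natDegree ≤ N) :
    (∀ (K : Type) (_i1 : NormedAddCommGroup K) (_i2 : InnerProductSpace ℂ K)
        (_i3 : FiniteDimensional ℂ K) (W : H →ₗᵢ[ℂ] K) (U : K →L[ℂ] K),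
        U ∈ unitary (K →L[ℂ] K) →
        (∀ k : ℕ, 1 ≤ k → k ≤ N →
          ∀ h : H, adjoint W.toContinuousLinearMap ((U ^ k) (W h)) = (T ^ k) h) →
        ‖Polynomial.aeval T p‖ ≤ sSup {x : ℝ | ∃ z : ℂ, ‖z‖ = 1 ∧ x = ‖p.eval z‖}) ∧
    ‖Polynomial.aeval T p‖ ≤ sSup {x : ℝ | ∃ z : ℂ, ‖z‖ = 1 ∧ x = ‖p.eval z‖} := by
  have hM (z : ℂ) (hz : ‖z‖ = 1) := norm_eval_le_sSup_of_norm_eq_one p hz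
  have hM0 := (norm_nonneg _).trans (hM 1 norm_one)
  refine ⟨fun K _ _ _ W U hU hdil => norm_aeval_le_of_unitary_dilation hU hdil hdeg hM0 hM, ?_⟩
  obtain ⟨K, _, _, _, W, U, hU, hdil⟩ := exists_unitary_dilation hT N
  exact norm_aeval_le_of_unitary_dilation hU hdil hdeg hM0 hM
end

section
/- Let T_1, ..., T_k be commuting contractions on a finite-dimensional Hilbert space H with a unitary N-dilation on a space K of dimension m. Then there exist m points w^1, ..., w^m ∈ 𝕋^k and m positive semidefinite operators A_1, ..., A_m on H with ∑ A_i = I_H such that p(T_1, ..., T_k) = ∑_{i=1}^m p(w^i_1, ..., w^i_k) A_i for every polynomial p of total degree at most N. -/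
/-!
The commuting unitaries `Uⱼ` are normal, so they have a joint orthonormal eigenbasis `e₁, …, e_m`
of `K`, with unimodular eigenvalues `wᵃⱼ`. Compressing the rank-one projections onto the `eₐ` by
the isometry `W` gives positive operators `Aₐ = W* Pₐ W` with `∑ Aₐ = W* W = 1`, and a monomial of
degree at most `N` in the `Uⱼ`, being diagonal in that basis, compresses to
`Tᵈ = W* Uᵈ W = ∑ₐ (wᵃ)ᵈ Aₐ`. Linearity extends this to all polynomials of degree at most `N`.
-/

open ContinuousLinearMap

/-- Evaluation of a multivariate polynomial at a commuting tuple of operators. -/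
noncomputable def mvPolyEvalCLM {H : Type} [NormedAddCommGroup H] [InnerProductSpace ℂ H]
    {k : ℕ} (T : Fin k → (H →L[ℂ] H)) (hT : ∀ i j, Commute (T i) (T j))
    (p : MvPolynomial (Fin k) ℂ) : H →L[ℂ] H :=
  ∑ d ∈ p.support, p.coeff d •
    Finset.univ.noncommProd (fun i => (T i) ^ (d i))
      (fun i _ j _ _ => (hT i j).pow_pow (d i) (d j))

open scoped ComplexStarModule Function

theorem Commute.star_right_of_mem_unitary {R : Type*} [Monoid R] [StarMul R] {x u : R}
    (hu : u ∈ unitary R) (h : Commute x u) : Commute x (star u) := by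
  have := h.units_inv_right (u := Unitary.toUnits ⟨u, hu⟩)
  simp only [Unitary.val_inv_toUnits_apply] at this
  rwa [← Unitary.star_eq_inv] at this

section RealPart
variable {A : Type*} [Ring A] [StarRing A] [Module ℂ A] [StarModule ℂ A] [IsScalarTower ℂ A A]
  [SMulCommClass ℂ A A]

theorem Commute.realPart_right {a b : A} (h : Commute a b) (h' : Commute a (star b)) :
    Commute a (ℜ b : A) := by
  rw [realPart_apply_coe]
  exact (h.add_right h').smul_right _

theorem Commute.imaginaryPart_right {a b : A} (h : Commute a b) (h' : Commute a (star b)) :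
    Commute a (ℑ b : A) := by
  rw [imaginaryPart_apply_coe]
  exact ((h.sub_right h').smul_right _).smul_right _

end RealPart

theorem OrthogonalFamily.exists_orthonormalBasis_subordinate {𝕜 E ι : Type*} [RCLike 𝕜]
    [NormedAddCommGroup E] [InnerProductSpace 𝕜 E] [FiniteDimensional 𝕜 E]
    {V : ι → Submodule 𝕜 E} (hV : OrthogonalFamily 𝕜 (fun i => V i) fun i => (V i).subtypeₗᵢ)
    (htop : ⨆ i, V i = ⊤) :
    ∃ (e : OrthonormalBasis (Fin (Module.finrank 𝕜 E)) 𝕜 E) (σ : Fin (Module.finrank 𝕜 E) → ι),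
      ∀ a, e a ∈ V (σ a) := by
  classical
  let V' : {i // V i ≠ ⊥} → Submodule 𝕜 E := fun i => V i
  have : Fintype {i // V i ≠ ⊥} := hV.independent.fintypeNeBotOfFiniteDimensional
  have hV' : OrthogonalFamily 𝕜 (fun i => V' i) fun i => (V' i).subtypeₗᵢ :=
    hV.comp Subtype.val_injective
  have hint : DirectSum.IsInternal V' := by
    rw [hV'.isInternal_iff, iSup_ne_bot_subtype, htop, Submodule.top_orthogonal_eq_bot]
  exact ⟨hint.subordinateOrthonormalBasis rfl hV',
    fun a => (hint.subordinateOrthonormalBasisIndex rfl a hV').1,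
    fun a => hint.subordinateOrthonormalBasis_subordinate rfl a hV'⟩

open Module.End in
theorem LinearMap.IsSymmetric.exists_orthonormalBasis_apply_eq_smul {𝕜 E ι : Type*} [RCLike 𝕜]
    [NormedAddCommGroup E] [InnerProductSpace 𝕜 E] [FiniteDimensional 𝕜 E]
    {T : ι → E →ₗ[𝕜] E} (hT : ∀ i, (T i).IsSymmetric) (hC : Pairwise (Commute on T)) :
    ∃ (e : OrthonormalBasis (Fin (Module.finrank 𝕜 E)) 𝕜 E) (χ : Fin (Module.finrank 𝕜 E) → ι → 𝕜),
      ∀ a i, T i (e a) = χ a i • e a := by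
  obtain ⟨e, χ, he⟩ := (orthogonalFamily_iInf_eigenspaces hT).exists_orthonormalBasis_subordinate
    (iSup_iInf_eq_top_of_commute hT hC)
  exact ⟨e, χ, fun a i => mem_eigenspace_iff.mp ((Submodule.mem_iInf _).mp (he a) i)⟩

section JointEigenbasis
variable {E ι : Type*} [NormedAddCommGroup E] [InnerProductSpace ℂ E] [FiniteDimensional ℂ E]

theorem ContinuousLinearMap.exists_orthonormalBasis_apply_eq_smul_of_commute
    {S : ι → E →L[ℂ] E} (hC : ∀ i j, Commute (S i) (S j))
    (hC' : ∀ i j, Commute (S i) (star (S j))) :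
    ∃ (e : OrthonormalBasis (Fin (Module.finrank ℂ E)) ℂ E) (χ : Fin (Module.finrank ℂ E) → ι → ℂ),
      ∀ a i, S i (e a) = χ a i • e a := by
  -- the real and imaginary parts of all the `S i` form a commuting family of self-adjoint operators
  let R : ι ⊕ ι → E →L[ℂ] E := Sum.elim (fun i => ℜ (S i)) (fun i => ℑ (S i))
  have hR_sa : ∀ p, IsSelfAdjoint (R p) := by
    rintro (i | i)
    exacts [(ℜ (S i)).2, (ℑ (S i)).2]
  have hR_comm_of : ∀ x, (∀ j, Commute x (S j) ∧ Commute x (star (S j))) →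
      ∀ q, Commute x (R q) := by
    rintro x hx (j | j)
    exacts [(hx j).1.realPart_right (hx j).2, (hx j).1.imaginaryPart_right (hx j).2]
  have hR_comm : ∀ p q, Commute (R p) (R q) := fun p => hR_comm_of _ fun j =>
    ⟨(hR_comm_of _ (fun i => ⟨hC j i, hC' j i⟩) p).symm,
      (hR_comm_of _ (fun i => ⟨(hC' i j).symm, (hC j i).star_star⟩) p).symm⟩
  obtain ⟨e, χ, he⟩ := LinearMap.IsSymmetric.exists_orthonormalBasis_apply_eq_smul
    (T := fun p => (R p : E →ₗ[ℂ] E))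
    (fun p => isSelfAdjoint_iff_isSymmetric.mp (hR_sa p))
    (fun p q _ => (hR_comm p q).map toLinearMapRingHom)
  refine ⟨e, fun a i => χ a (.inl i) + Complex.I * χ a (.inr i), fun a i => ?_⟩
  have hre : (ℜ (S i) : E →L[ℂ] E) (e a) = χ a (.inl i) • e a := he a (.inl i)
  have him : (ℑ (S i) : E →L[ℂ] E) (e a) = χ a (.inr i) • e a := he a (.inr i)
  conv_lhs => rw [← realPart_add_I_smul_imaginaryPart (S i)]
  rw [add_apply, smul_apply, hre, him, smul_smul, add_smul]

theorem exists_orthonormalBasis_apply_eq_smul_of_mem_unitary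
    {U : ι → E →L[ℂ] E} (hU : ∀ i, U i ∈ unitary (E →L[ℂ] E))
    (hC : ∀ i j, Commute (U i) (U j)) :
    ∃ (e : OrthonormalBasis (Fin (Module.finrank ℂ E)) ℂ E) (χ : Fin (Module.finrank ℂ E) → ι → ℂ),
      ∀ a i, U i (e a) = χ a i • e a :=
  exists_orthonormalBasis_apply_eq_smul_of_commute hC
    fun i j => (hC i j).star_right_of_mem_unitary (hU j)

theorem norm_eq_one_of_mem_unitary_of_apply_eq_smul {U : E →L[ℂ] E} (hU : U ∈ unitary (E →L[ℂ] E))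
    {c : ℂ} {v : E} (hv : ‖v‖ = 1) (h : U v = c • v) : ‖c‖ = 1 := by
  simpa [h, norm_smul, hv] using U.norm_map_of_mem_unitary hU v

end JointEigenbasis

theorem adjoint_comp_comp_eq_sum_rankOne {𝕜 H K ι : Type*} [RCLike 𝕜] [Fintype ι]
    [NormedAddCommGroup H] [InnerProductSpace 𝕜 H] [CompleteSpace H]
    [NormedAddCommGroup K] [InnerProductSpace 𝕜 K] [CompleteSpace K]
    (W : H →L[𝕜] K) (e : OrthonormalBasis ι 𝕜 K) (Q : K →L[𝕜] K) (c : ι → 𝕜)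
    (hQ : ∀ a, Q (e a) = c a • e a) :
    adjoint W ∘L Q ∘L W =
      ∑ a, c a • InnerProductSpace.rankOne 𝕜 (adjoint W (e a)) (adjoint W (e a)) := by
  ext h
  conv_lhs => rw [comp_apply, comp_apply, ← e.sum_repr' (W h)]
  simp only [map_sum, map_smul, hQ, sum_apply, smul_apply, InnerProductSpace.rankOne_apply,
    adjoint_inner_left, smul_smul, mul_comm]

section Monomial
variable {ι : Type*} [Fintype ι]

def commMonomial {M : Type*} [Monoid M] (x : ι → M) (hx : ∀ i j, Commute (x i) (x j))
    (d : ι → ℕ) : M :=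
  Finset.univ.noncommProd (fun i => x i ^ d i) (fun i _ j _ _ => (hx i j).pow_pow (d i) (d j))

section Eigenvector
variable {R E : Type*} [CommSemiring R] [TopologicalSpace E] [AddCommMonoid E] [Module R E]

theorem ContinuousLinearMap.pow_apply_of_apply_eq_smul {f : E →L[R] E} {c : R} {v : E}
    (hv : f v = c • v) (n : ℕ) : (f ^ n) v = c ^ n • v := by
  induction n with
  | zero => simp
  | succ n ih => rw [pow_succ, mul_apply_eq_comp, hv, map_smul, ih, smul_smul, ← pow_succ']

theorem Finset.noncommProd_apply_of_apply_eq_smul {κ : Type*} (s : Finset κ) {f : κ → E →L[R] E}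
    {c : κ → R} {v : E} (hv : ∀ i, f i v = c i • v)
    (comm : (s : Set κ).Pairwise (Commute on f)) :
    s.noncommProd f comm v = (∏ i ∈ s, c i) • v := by
  induction s using Finset.cons_induction with
  | empty => simp
  | cons a s ha ih =>
    rw [noncommProd_cons, mul_apply_eq_comp, ih, map_smul, hv, smul_smul, prod_cons, mul_comm]

theorem commMonomial_apply_of_apply_eq_smul {x : ι → E →L[R] E}
    (hx : ∀ i j, Commute (x i) (x j)) {c : ι → R} {v : E} (hv : ∀ i, x i v = c i • v)
    (d : ι → ℕ) : commMonomial x hx d v = (∏ i, c i ^ d i) • v :=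
  Finset.univ.noncommProd_apply_of_apply_eq_smul
    (fun i => (x i).pow_apply_of_apply_eq_smul (hv i) (d i)) _

end Eigenvector

theorem mvPolyEvalCLM_eq_sum_eval_smul {H : Type} [NormedAddCommGroup H] [InnerProductSpace ℂ H]
    {k : ℕ} (T : Fin k → H →L[ℂ] H) (hT : ∀ i j, Commute (T i) (T j)) (w : ι → Fin k → ℂ)
    (A : ι → H →L[ℂ] H) (p : MvPolynomial (Fin k) ℂ)
    (hmono : ∀ d ∈ p.support, commMonomial T hT d = ∑ a, (∏ j, w a j ^ d j) • A a) :
    mvPolyEvalCLM T hT p = ∑ a, MvPolynomial.eval (w a) p • A a := by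
  calc mvPolyEvalCLM T hT p
      = ∑ d ∈ p.support, p.coeff d • ∑ a, (∏ j, w a j ^ d j) • A a :=
        Finset.sum_congr rfl fun d hd => by rw [← hmono d hd]; rfl
    _ = ∑ a, ∑ d ∈ p.support, (p.coeff d * ∏ j, w a j ^ d j) • A a := by
        simp_rw [Finset.smul_sum, smul_smul]
        exact Finset.sum_comm
    _ = ∑ a, MvPolynomial.eval (w a) p • A a := by
        simp_rw [MvPolynomial.eval_eq', Finset.sum_smul]

end Monomial

theorem N_dilation_convex_decomposition_general
    (H K : Type)
    [NormedAddCommGroup H] [InnerProductSpace ℂ H] [FiniteDimensional ℂ H]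
    [NormedAddCommGroup K] [InnerProductSpace ℂ K] [FiniteDimensional ℂ K]
    (k N : ℕ) (T : Fin k → (H →L[ℂ] H))
    (hTcomm : ∀ i j, Commute (T i) (T j))
    (W : H →ₗᵢ[ℂ] K)
    (U : Fin k → (K →L[ℂ] K)) (hU : ∀ i, U i ∈ unitary (K →L[ℂ] K))
    (hUcomm : ∀ i j, Commute (U i) (U j))
    (hdil : ∀ m : Fin k → ℕ, (∑ i, m i) ≤ N →
      ∀ h : H,
        adjoint W.toContinuousLinearMap
          ((Finset.univ.noncommProd (fun i => (U i) ^ (m i))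
              (fun i _ j _ _ => (hUcomm i j).pow_pow (m i) (m j))) (W h)) =
        (Finset.univ.noncommProd (fun i => (T i) ^ (m i))
            (fun i _ j _ _ => (hTcomm i j).pow_pow (m i) (m j))) h) :
    ∃ (w : Fin (Module.finrank ℂ K) → Fin k → ℂ) (A : Fin (Module.finrank ℂ K) → (H →L[ℂ] H)),
      (∀ i j, ‖w i j‖ = 1) ∧
      (∀ i, (A i).IsPositive) ∧
      (∑ i, A i) = 1 ∧
      ∀ p : MvPolynomial (Fin k) ℂ, p.totalDegree ≤ N →
        mvPolyEvalCLM T hTcomm p = ∑ i, MvPolynomial.eval (w i) p • A i := by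
  obtain ⟨e, w, hew⟩ := exists_orthonormalBasis_apply_eq_smul_of_mem_unitary hU hUcomm
  set V := W.toContinuousLinearMap
  set A := fun a => InnerProductSpace.rankOne ℂ (adjoint V (e a)) (adjoint V (e a))
  have hcompress := adjoint_comp_comp_eq_sum_rankOne V e
  refine ⟨w, A, fun a j => norm_eq_one_of_mem_unitary_of_apply_eq_smul (hU j)
      (e.orthonormal.1 a) (hew a j), fun a => InnerProductSpace.isPositive_rankOne_self _, ?_,
    fun p hp => mvPolyEvalCLM_eq_sum_eval_smul T hTcomm w A p fun d hd => ?_⟩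
  · calc ∑ a, A a = adjoint V ∘L 1 ∘L V := by simpa using (hcompress 1 1 (by simp)).symm
      _ = 1 := by rw [one_def, id_comp, W.adjoint_comp_self]
  · have hdeg : ∑ i, d i ≤ N := by
      rw [← Finsupp.degree_eq_sum]
      exact (MvPolynomial.le_totalDegree hd).trans hp
    have hTU : commMonomial T hTcomm d = adjoint V ∘L commMonomial U hUcomm d ∘L V :=
      ContinuousLinearMap.ext fun h => (hdil d hdeg h).symm
    rw [hTU]
    exact hcompress _ _ fun a => commMonomial_apply_of_apply_eq_smul hUcomm (hew a) d

/-- Let `T₁, …, T_k` be commuting contractions on a finite-dimensional Hilbert space `H`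
with a unitary `N`-dilation on a space `K` of dimension `m`. Then there exist `m` points
`w¹, …, wᵐ` on the `k`-torus and `m` positive operators `A₁, …, A_m` on `H` summing to
the identity, such that `p(T₁, …, T_k) = ∑ᵢ p(wⁱ) Aᵢ` for every polynomial `p` of total
degree at most `N`. -/
theorem N_dilation_convex_decomposition
    (H K : Type)
    [NormedAddCommGroup H] [InnerProductSpace ℂ H] [FiniteDimensional ℂ H]
    [NormedAddCommGroup K] [InnerProductSpace ℂ K] [FiniteDimensional ℂ K]
    (k N : ℕ) (T : Fin k → (H →L[ℂ] H)) (hT : ∀ i, ‖T i‖ ≤ 1)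
    (hTcomm : ∀ i j, Commute (T i) (T j))
    (W : H →ₗᵢ[ℂ] K)
    (U : Fin k → (K →L[ℂ] K)) (hU : ∀ i, U i ∈ unitary (K →L[ℂ] K))
    (hUcomm : ∀ i j, Commute (U i) (U j))
    (hdil : ∀ m : Fin k → ℕ, (∑ i, m i) ≤ N →
      ∀ h : H,
        adjoint W.toContinuousLinearMap
          ((Finset.univ.noncommProd (fun i => (U i) ^ (m i))
              (fun i _ j _ _ => (hUcomm i j).pow_pow (m i) (m j))) (W h)) =
        (Finset.univ.noncommProd (fun i => (T i) ^ (m i))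
            (fun i _ j _ _ => (hTcomm i j).pow_pow (m i) (m j))) h) :
    ∃ (w : Fin (Module.finrank ℂ K) → Fin k → ℂ) (A : Fin (Module.finrank ℂ K) → (H →L[ℂ] H)),
      (∀ i j, ‖w i j‖ = 1) ∧
      (∀ i, (A i).IsPositive) ∧
      (∑ i, A i) = 1 ∧
      ∀ p : MvPolynomial (Fin k) ℂ, p.totalDegree ≤ N →
        mvPolyEvalCLM T hTcomm p = ∑ i, MvPolynomial.eval (w i) p • A i :=
  N_dilation_convex_decomposition_general H K k N T hTcomm W U hU hUcomm hdil
end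

section
/- Let N be a positive integer and t_1, ..., t_k complex numbers in the open unit disc. Put m = (N+1)^k. Then there exist m points w^1, ..., w^m on the k-torus 𝕋^k and nonnegative reals a_1, ..., a_m with ∑ a_i = 1 such that p(t_1, ..., t_k) = ∑_{i=1}^m a_i p(w^i_1, ..., w^i_k) for every polynomial p in k variables of total degree at most N. -/
/-!
For one variable, take as nodes the `n + 2` roots of
`q(z) = z ^ (n + 1) (z - t) - (1 - conj t * z)`. Comparing moduli gives
`(|z| ^ (2n + 2) - 1) |z - t|² = (1 - |t|²)(1 - |z|²)`, so every root lies on the unit circle;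
at a root, `q'(z) (z - t) = (n + 1) |1 - conj t * z|² + 1 - |t|² > 0`, so the roots are simple
and the Lagrange weights `q(t) / ((t - z) q'(z))` of interpolation at `t` are positive reals.
This is a positive quadrature exact in degree `n + 1`; the product of such rules over the `k`
coordinates integrates every monomial of partial degrees `≤ N` exactly.
-/

open Polynomial Complex Finset ComplexConjugate

theorem Polynomial.nodup_roots_of_eval_derivative_ne_zero {F : Type*} [Field F] {p : F[X]}
    (h : ∀ x, p.IsRoot x → eval x (derivative p) ≠ 0) : p.roots.Nodup := by
  classical
  rcases eq_or_ne p 0 with rfl | hp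
  · simp
  refine Multiset.nodup_iff_count_le_one.mpr fun x => ?_
  rw [count_roots]
  by_contra! hlt
  obtain ⟨hroot, hderiv⟩ := (one_lt_rootMultiplicity_iff_isRoot hp).mp hlt
  exact h x hroot hderiv

namespace Lagrange

variable {F : Type*} [Field F] [DecidableEq F]

theorem nodal_toFinset_roots {p : F[X]} (hm : p.Monic) (hs : p.Splits) (hnd : p.roots.Nodup) :
    nodal p.roots.toFinset id = p := by
  rw [nodal_eq, prod_eq_multiset_prod, Multiset.toFinset_val, hnd.dedup]
  exact (hs.eq_prod_roots_of_monic hm).symm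

theorem eval_basis_eq_div {s : Finset F} {x t : F} (hx : x ∈ s) (ht : t ≠ x) :
    eval t (Lagrange.basis s id x) =
      eval t (nodal s id) / ((t - x) * eval x (derivative (nodal s id))) := by
  rw [eval_basis_not_at_node hx ht, nodalWeight_eq_eval_derivative_nodal hx, id,
    div_eq_mul_inv, mul_inv, mul_comm (t - x)⁻¹]

theorem eval_eq_sum_eval_basis {s : Finset F} {f : F[X]} (hf : f.degree < #s) (t : F) :
    eval t f = ∑ x ∈ s, eval t (Lagrange.basis s id x) * eval x f := by
  conv_lhs => rw [eq_interpolate Function.injective_id.injOn hf]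
  simp only [interpolate_apply, eval_finsetSum, eval_mul, eval_C, id, mul_comm]

end Lagrange

theorem MvPolynomial.eval_eq_sum_prod_of_moments {R σ ι : Type*} [CommSemiring R] [Fintype σ]
    [DecidableEq σ] [Fintype ι] {n : ℕ} {t : σ → R} {w a : σ → ι → R}
    (hmom : ∀ j, ∀ d ≤ n, ∑ s, a j s * w j s ^ d = t j ^ d) {p : MvPolynomial σ R}
    (hp : ∀ j, p.degreeOf j ≤ n) :
    eval t p = ∑ f : σ → ι, (∏ j, a j (f j)) * eval (fun j => w j (f j)) p := by
  have hmono : ∀ d ∈ p.support,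
      ∏ j, t j ^ d j = ∑ f : σ → ι, (∏ j, a j (f j)) * ∏ j, w j (f j) ^ d j := by
    intro d hd
    calc ∏ j, t j ^ d j = ∏ j, ∑ s, a j s * w j s ^ d j :=
          prod_congr rfl fun j _ => (hmom j _ ((monomial_le_degreeOf j hd).trans (hp j))).symm
      _ = _ := by simp_rw [Fintype.prod_sum, prod_mul_distrib]
  simp_rw [eval_eq', mul_sum]
  rw [sum_comm]
  refine sum_congr rfl fun d hd => ?_
  rw [hmono d hd, mul_sum]
  exact sum_congr rfl fun f _ => mul_left_comm _ _ _

theorem Complex.normSq_one_sub_conj_mul (t z : ℂ) :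
    normSq (1 - conj t * z) = normSq (z - t) + (1 - normSq t) * (1 - normSq z) := by
  simp only [normSq_apply, sub_re, sub_im, mul_re, mul_im, conj_re, conj_im, one_re, one_im]
  ring

theorem Complex.normSq_eq_one_of_pow_mul_sub_eq {m : ℕ} {t z : ℂ} (ht : normSq t < 1)
    (hz : z ^ m * (z - t) = 1 - conj t * z) : normSq z = 1 := by
  have key : (normSq z ^ m - 1) * normSq (z - t) = (1 - normSq t) * (1 - normSq z) := by
    rw [sub_mul, one_mul, ← map_pow, ← map_mul, hz, normSq_one_sub_conj_mul]
    ring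
  have hdist := normSq_nonneg (z - t)
  rcases lt_trichotomy (normSq z) 1 with hlt | heq | hgt
  · have := pow_le_one₀ (normSq_nonneg z) hlt.le (n := m)
    nlinarith
  · exact heq
  · have := one_le_pow₀ hgt.le (n := m)
    nlinarith

/-- Its roots solve `z ^ (n + 1) * B(z) = 1` for the Blaschke factor
`B(z) = (z - t) / (1 - conj t * z)`. -/
noncomputable def circleNodePoly (n : ℕ) (t : ℂ) : ℂ[X] :=
  X ^ (n + 1) * (X - C t) - (1 - C (conj t) * X)

noncomputable def circleWeight (n : ℕ) (t z : ℂ) : ℝ :=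
  (1 - normSq t) / ((n + 1) * normSq (1 - conj t * z) + (1 - normSq t))

theorem circleWeight_nonneg (n : ℕ) {t : ℂ} (ht : normSq t ≤ 1) (z : ℂ) :
    0 ≤ circleWeight n t z :=
  div_nonneg (sub_nonneg.mpr ht)
    (add_nonneg (mul_nonneg (by positivity) (normSq_nonneg _)) (sub_nonneg.mpr ht))

namespace circleNodePoly

variable (n : ℕ) (t : ℂ)

theorem natDegree_eq : (circleNodePoly n t).natDegree = n + 2 := by
  unfold circleNodePoly; compute_degree!; simp

theorem monic : (circleNodePoly n t).Monic := by
  unfold circleNodePoly; monicity!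

variable {n t}

theorem isRoot_iff {z : ℂ} :
    (circleNodePoly n t).IsRoot z ↔ z ^ (n + 1) * (z - t) = 1 - conj t * z := by
  simp [circleNodePoly, sub_eq_zero]

theorem eval_self : (circleNodePoly n t).eval t = -((1 - normSq t : ℝ) : ℂ) := by
  simp [circleNodePoly, normSq_eq_conj_mul_self]

theorem eval_derivative_mul_sub {z : ℂ} (hz : (circleNodePoly n t).IsRoot z)
    (hnz : normSq z = 1) :
    (derivative (circleNodePoly n t)).eval z * (z - t) =
      (((n + 1) * normSq (1 - conj t * z) + (1 - normSq t) : ℝ) : ℂ) := by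
  rw [isRoot_iff] at hz
  have hzz : conj z * z = 1 := by rw [← normSq_eq_conj_mul_self, hnz, ofReal_one]
  simp only [circleNodePoly, derivative_sub, derivative_mul, derivative_X_pow, derivative_sub,
    derivative_X, derivative_C, derivative_one, eval_sub, eval_add, eval_mul, eval_pow, eval_X,
    eval_C, eval_one, eval_zero]
  push_cast
  simp only [normSq_eq_conj_mul_self, map_sub, map_one, map_mul, conj_conj]
  linear_combination ((n + 1) * (1 - t * conj z) + 1) * hz + (n + 1) * z ^ n * (z - t) * t * hzz

theorem normSq_eq_one_of_isRoot (ht : normSq t < 1) {z : ℂ}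
    (hz : (circleNodePoly n t).IsRoot z) : normSq z = 1 :=
  normSq_eq_one_of_pow_mul_sub_eq ht (isRoot_iff.mp hz)

theorem eval_derivative_ne_zero (ht : normSq t < 1) {z : ℂ}
    (hz : (circleNodePoly n t).IsRoot z) :
    (derivative (circleNodePoly n t)).eval z ≠ 0 := by
  intro h0
  have key := eval_derivative_mul_sub hz (normSq_eq_one_of_isRoot ht hz)
  rw [h0, zero_mul, eq_comm, ofReal_eq_zero] at key
  have : 0 ≤ (n + 1) * normSq (1 - conj t * z) := mul_nonneg (by positivity) (normSq_nonneg _)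
  linarith

theorem nodup_roots (ht : normSq t < 1) : (circleNodePoly n t).roots.Nodup :=
  nodup_roots_of_eval_derivative_ne_zero fun _ hz => eval_derivative_ne_zero ht hz

theorem card_roots_toFinset (ht : normSq t < 1) :
    #(circleNodePoly n t).roots.toFinset = n + 2 := by
  rw [Multiset.toFinset_card_of_nodup (nodup_roots ht),
    ← (IsAlgClosed.splits _).natDegree_eq_card_roots, natDegree_eq]

theorem eval_basis_roots (ht : normSq t < 1) {z : ℂ}
    (hz : z ∈ (circleNodePoly n t).roots.toFinset) :
    eval t (Lagrange.basis (circleNodePoly n t).roots.toFinset id z) = circleWeight n t z := by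
  have hroot : (circleNodePoly n t).IsRoot z := isRoot_of_mem_roots (Multiset.mem_toFinset.mp hz)
  have htz : t ≠ z := fun h => by
    have := normSq_eq_one_of_isRoot ht hroot
    rw [← h] at this
    linarith
  rw [Lagrange.eval_basis_eq_div hz htz,
    Lagrange.nodal_toFinset_roots (monic n t) (IsAlgClosed.splits _) (nodup_roots ht), eval_self,
    show ∀ a : ℂ, (t - z) * a = -(a * (z - t)) from fun _ => by ring,
    eval_derivative_mul_sub hroot (normSq_eq_one_of_isRoot ht hroot), neg_div_neg_eq, circleWeight,
    ofReal_div]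

end circleNodePoly

theorem exists_circle_quadrature (n : ℕ) {t : ℂ} (ht : ‖t‖ < 1) :
    ∃ (w : Fin (n + 1) → ℂ) (a : Fin (n + 1) → ℝ),
      (∀ s, ‖w s‖ = 1) ∧ (∀ s, 0 ≤ a s) ∧ ∀ d ≤ n, ∑ s, (a s : ℂ) * w s ^ d = t ^ d := by
  rcases n with _ | n
  · exact ⟨fun _ => 1, fun _ => 1, by simp, by simp, fun d hd => by simp [Nat.le_zero.mp hd]⟩
  have ht' : normSq t < 1 := by
    rw [normSq_eq_norm_sq]; exact pow_lt_one₀ (norm_nonneg t) ht two_ne_zero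
  set S := (circleNodePoly n t).roots.toFinset
  have hS : ∀ z ∈ S, (circleNodePoly n t).IsRoot z := fun z hz =>
    isRoot_of_mem_roots (Multiset.mem_toFinset.mp hz)
  let e := S.equivFinOfCardEq (circleNodePoly.card_roots_toFinset ht')
  refine ⟨fun s => e.symm s, fun s => circleWeight n t (e.symm s), fun s => ?_,
    fun s => circleWeight_nonneg n ht'.le _, fun d hd => ?_⟩
  · rw [norm_def, circleNodePoly.normSq_eq_one_of_isRoot ht' (hS _ (e.symm s).2), Real.sqrt_one]
  · have hdeg : (X ^ d : ℂ[X]).degree < #S := by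
      rw [degree_X_pow, circleNodePoly.card_roots_toFinset ht']
      exact_mod_cast Nat.lt_succ_of_le hd
    rw [e.symm.sum_comp (fun z : S => (circleWeight n t z : ℂ) * z ^ d), sum_coe_sort S
      (fun z => (circleWeight n t z : ℂ) * z ^ d), ← eval_X_pow (x := t),
      Lagrange.eval_eq_sum_eval_basis hdeg]
    exact sum_congr rfl fun z hz => by rw [circleNodePoly.eval_basis_roots ht' hz, eval_X_pow]

theorem cubature_on_torus_general
    (N : ℕ) (k : ℕ) (t : Fin k → ℂ) (ht : ∀ j, ‖t j‖ < 1) :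
    ∃ (w : Fin ((N + 1) ^ k) → Fin k → ℂ) (a : Fin ((N + 1) ^ k) → ℝ),
      (∀ i j, ‖w i j‖ = 1) ∧
      (∀ i, 0 ≤ a i) ∧
      (∑ i, a i) = 1 ∧
      ∀ p : MvPolynomial (Fin k) ℂ, p.totalDegree ≤ N →
        MvPolynomial.eval t p = ∑ i, (a i : ℂ) * MvPolynomial.eval (w i) p := by
  choose w a hw ha hmom using fun j => exists_circle_quadrature N (ht j)
  let e : (Fin k → Fin (N + 1)) ≃ Fin ((N + 1) ^ k) := finFunctionFinEquiv
  have hcub : ∀ p : MvPolynomial (Fin k) ℂ, p.totalDegree ≤ N →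
      MvPolynomial.eval t p = ∑ i, ((∏ j, a j (e.symm i j) : ℝ) : ℂ) *
        MvPolynomial.eval (fun j => w j (e.symm i j)) p := fun p hp => by
    rw [MvPolynomial.eval_eq_sum_prod_of_moments hmom
      fun j => (p.degreeOf_le_totalDegree j).trans hp, ← e.sum_comp]
    simp_rw [e.symm_apply_apply, ofReal_prod]
  refine ⟨fun i j => w j (e.symm i j), fun i => ∏ j, a j (e.symm i j), fun i j => hw j _,
    fun i => prod_nonneg fun j _ => ha j _, ?_, hcub⟩
  have h1 := hcub 1 (by simp)
  simp only [map_one, mul_one] at h1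
  exact_mod_cast h1.symm

/-- **Cubature on the torus.** Let `N ≥ 1` and `t₁, …, t_k` points of the open unit disc,
and put `m = (N+1)^k`. Then there exist `m` points `w¹, …, wᵐ` on the `k`-torus and
nonnegative weights `a₁, …, a_m` summing to `1` such that
`p(t₁, …, t_k) = ∑ᵢ aᵢ p(wⁱ)` for every polynomial `p` in `k` variables of total degree
at most `N`. -/
theorem cubature_on_torus
    (N : ℕ) (hN : 0 < N) (k : ℕ) (t : Fin k → ℂ) (ht : ∀ j, ‖t j‖ < 1) :
    ∃ (w : Fin ((N + 1) ^ k) → Fin k → ℂ) (a : Fin ((N + 1) ^ k) → ℝ),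
      (∀ i j, ‖w i j‖ = 1) ∧
      (∀ i, 0 ≤ a i) ∧
      (∑ i, a i) = 1 ∧
      ∀ p : MvPolynomial (Fin k) ℂ, p.totalDegree ≤ N →
        MvPolynomial.eval t p = ∑ i, (a i : ℂ) * MvPolynomial.eval (w i) p :=
  cubature_on_torus_general N k t ht
end
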